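/- arXiv:2512.21656 — 5 statements merged into one kernel-verified Lean document; each statement's English description precedes it below -/
import Mathlib

section
/- Let u₁, u₂, u₃, v₁, v₂, v₃ be vectors in ℝ³ (with the Euclidean norm), and let F, M ≥ 0 and τ > 0 be constants such that ‖uᵢ‖ ≤ F and ‖vᵢ‖ ≤ M for i = 1, 2, 3, det[v₁, v₂, v₃] ≥ τ, and F³ + 3F²M + 3FM² < τ. Then det[u₁+v₁, u₂+v₂, u₃+v₃] > 0. -/
/-!
Writing `uᵢ + vᵢ` and expanding `det3` trilinearly, `det3 (u + v) - det3 v` is a sum of seven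
determinants, each having at least one column `uᵢ`. By Hadamard's inequality
`|det3 a b c| ≤ ‖a‖ ‖b‖ ‖c‖` (Cauchy–Schwarz for `⟪a, b × c⟫` plus Lagrange's identity for
`‖b × c‖`), the seven terms have total size at most `(F + M)³ - M³ = F³ + 3F²M + 3FM² < τ`.
-/

/-- Determinant of the 3×3 real matrix whose columns are `a`, `b`, `c`. -/
noncomputable def det3 (a b c : EuclideanSpace ℝ (Fin 3)) : ℝ :=
  Matrix.det (Matrix.of ![![a 0, b 0, c 0], ![a 1, b 1, c 1], ![a 2, b 2, c 2]])

open Matrix WithLp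
open scoped RealInnerProductSpace

lemma det3_eq_inner_cross (a b c : EuclideanSpace ℝ (Fin 3)) :
    det3 a b c = ⟪a, toLp 2 (ofLp b ⨯₃ ofLp c)⟫ := by
  rw [det3, EuclideanSpace.inner_toLp_toLp, star_trivial, dotProduct_comm, triple_product_eq_det,
    ← det_transpose]
  congr 1
  ext i j
  fin_cases i <;> fin_cases j <;> rfl

lemma norm_cross_le (b c : EuclideanSpace ℝ (Fin 3)) :
    ‖toLp 2 (ofLp b ⨯₃ ofLp c)‖ ≤ ‖b‖ * ‖c‖ := by
  have lagrange : ‖toLp 2 (ofLp b ⨯₃ ofLp c)‖ ^ 2 = ‖b‖ ^ 2 * ‖c‖ ^ 2 - ⟪b, c⟫ ^ 2 := by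
    simp only [← real_inner_self_eq_norm_sq, EuclideanSpace.inner_eq_star_dotProduct,
      star_trivial, cross_dot_cross, dotProduct_comm (ofLp c)]
    ring
  refine le_of_sq_le_sq ?_ (by positivity)
  rw [lagrange, mul_pow]
  nlinarith [sq_nonneg ⟪b, c⟫]

theorem abs_det3_le (a b c : EuclideanSpace ℝ (Fin 3)) :
    |det3 a b c| ≤ ‖a‖ * ‖b‖ * ‖c‖ := by
  rw [det3_eq_inner_cross, mul_assoc]
  exact (abs_real_inner_le_norm _ _).trans (by gcongr; exact norm_cross_le b c)

theorem abs_det3_le_of_norm_le {a b c : EuclideanSpace ℝ (Fin 3)} {A B C : ℝ}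
    (ha : ‖a‖ ≤ A) (hb : ‖b‖ ≤ B) (hc : ‖c‖ ≤ C) : |det3 a b c| ≤ A * B * C := by
  have hA : 0 ≤ A := (norm_nonneg a).trans ha
  have hB : 0 ≤ B := (norm_nonneg b).trans hb
  exact (abs_det3_le a b c).trans (by gcongr)

theorem det3_add_add_add (u₁ u₂ u₃ v₁ v₂ v₃ : EuclideanSpace ℝ (Fin 3)) :
    det3 (u₁ + v₁) (u₂ + v₂) (u₃ + v₃) =
      det3 u₁ u₂ u₃ + det3 u₁ u₂ v₃ + det3 u₁ v₂ u₃ + det3 u₁ v₂ v₃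
      + det3 v₁ u₂ u₃ + det3 v₁ u₂ v₃ + det3 v₁ v₂ u₃ + det3 v₁ v₂ v₃ := by
  simp only [det3, det_fin_three, of_apply, cons_val, PiLp.add_apply]
  ring

theorem abs_det3_add_sub_det3_le {u₁ u₂ u₃ v₁ v₂ v₃ : EuclideanSpace ℝ (Fin 3)} {F M : ℝ}
    (hu₁ : ‖u₁‖ ≤ F) (hu₂ : ‖u₂‖ ≤ F) (hu₃ : ‖u₃‖ ≤ F)
    (hv₁ : ‖v₁‖ ≤ M) (hv₂ : ‖v₂‖ ≤ M) (hv₃ : ‖v₃‖ ≤ M) :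
    |det3 (u₁ + v₁) (u₂ + v₂) (u₃ + v₃) - det3 v₁ v₂ v₃| ≤ (F + M) ^ 3 - M ^ 3 := by
  have h₁ := abs_le.1 (abs_det3_le_of_norm_le hu₁ hu₂ hu₃)
  have h₂ := abs_le.1 (abs_det3_le_of_norm_le hu₁ hu₂ hv₃)
  have h₃ := abs_le.1 (abs_det3_le_of_norm_le hu₁ hv₂ hu₃)
  have h₄ := abs_le.1 (abs_det3_le_of_norm_le hu₁ hv₂ hv₃)
  have h₅ := abs_le.1 (abs_det3_le_of_norm_le hv₁ hu₂ hu₃)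
  have h₆ := abs_le.1 (abs_det3_le_of_norm_le hv₁ hu₂ hv₃)
  have h₇ := abs_le.1 (abs_det3_le_of_norm_le hv₁ hv₂ hu₃)
  rw [det3_add_add_add, abs_le]
  constructor <;> linarith

theorem det3_perturbed_pos_general
    (u₁ u₂ u₃ v₁ v₂ v₃ : EuclideanSpace ℝ (Fin 3)) (F M τ : ℝ)
    (hu₁ : ‖u₁‖ ≤ F) (hu₂ : ‖u₂‖ ≤ F) (hu₃ : ‖u₃‖ ≤ F)
    (hv₁ : ‖v₁‖ ≤ M) (hv₂ : ‖v₂‖ ≤ M) (hv₃ : ‖v₃‖ ≤ M)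
    (hdet : τ ≤ det3 v₁ v₂ v₃)
    (hlt : F ^ 3 + 3 * F ^ 2 * M + 3 * F * M ^ 2 < τ) :
    0 < det3 (u₁ + v₁) (u₂ + v₂) (u₃ + v₃) := by
  have h := (abs_le.1 (abs_det3_add_sub_det3_le hu₁ hu₂ hu₃ hv₁ hv₂ hv₃)).1
  linarith

/-- positivity of the perturbed determinant. -/
theorem det3_perturbed_pos
    (u₁ u₂ u₃ v₁ v₂ v₃ : EuclideanSpace ℝ (Fin 3)) (F M τ : ℝ)
    (hF : 0 ≤ F) (hM : 0 ≤ M) (hτ : 0 < τ)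
    (hu₁ : ‖u₁‖ ≤ F) (hu₂ : ‖u₂‖ ≤ F) (hu₃ : ‖u₃‖ ≤ F)
    (hv₁ : ‖v₁‖ ≤ M) (hv₂ : ‖v₂‖ ≤ M) (hv₃ : ‖v₃‖ ≤ M)
    (hdet : τ ≤ det3 v₁ v₂ v₃)
    (hlt : F ^ 3 + 3 * F ^ 2 * M + 3 * F * M ^ 2 < τ) :
    0 < det3 (u₁ + v₁) (u₂ + v₂) (u₃ + v₃) :=
  det3_perturbed_pos_general u₁ u₂ u₃ v₁ v₂ v₃ F M τ hu₁ hu₂ hu₃ hv₁ hv₂ hv₃ hdet hlt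
end

section
/- (Coons boundary interpolation property) Let F₀, F₁ : [0,1] → ℝ be blending functions with F₀(t) + F₁(t) = 1 for all t, F₀(0) = 1, F₀(1) = 0 (hence F₁(0) = 0, F₁(1) = 1), and let S₁, …, S₆ : [0,1]² → ℝ³ be six faces satisfying the edge-compatibility relations. Then the Coons volume T : [0,1]³ → ℝ³ defined by the Coons formula interpolates all six faces: T(u,v,0) = S₁(u,v), T(u,v,1) = S₂(u,v), T(u,0,w) = S₃(u,w), T(u,1,w) = S₄(u,w), T(1,v,w) = S₅(v,w), and T(0,v,w) = S₆(v,w) for all u, v, w ∈ [0,1]. -/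
/-- The twelve edge-compatibility relations between the six faces of a hexahedral
domain (all parameters ranging over `[0,1]`). -/
def EdgeCompat (S₁ S₂ S₃ S₄ S₅ S₆ : ℝ → ℝ → EuclideanSpace ℝ (Fin 3)) : Prop :=
  (∀ u ∈ Set.Icc (0:ℝ) 1, S₁ u 0 = S₃ u 0) ∧
  (∀ u ∈ Set.Icc (0:ℝ) 1, S₁ u 1 = S₄ u 0) ∧
  (∀ u ∈ Set.Icc (0:ℝ) 1, S₂ u 0 = S₃ u 1) ∧
  (∀ u ∈ Set.Icc (0:ℝ) 1, S₂ u 1 = S₄ u 1) ∧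
  (∀ v ∈ Set.Icc (0:ℝ) 1, S₁ 0 v = S₆ v 0) ∧
  (∀ v ∈ Set.Icc (0:ℝ) 1, S₁ 1 v = S₅ v 0) ∧
  (∀ v ∈ Set.Icc (0:ℝ) 1, S₂ 0 v = S₆ v 1) ∧
  (∀ v ∈ Set.Icc (0:ℝ) 1, S₂ 1 v = S₅ v 1) ∧
  (∀ w ∈ Set.Icc (0:ℝ) 1, S₃ 0 w = S₆ 0 w) ∧
  (∀ w ∈ Set.Icc (0:ℝ) 1, S₃ 1 w = S₅ 0 w) ∧
  (∀ w ∈ Set.Icc (0:ℝ) 1, S₄ 0 w = S₆ 1 w) ∧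
  (∀ w ∈ Set.Icc (0:ℝ) 1, S₄ 1 w = S₅ 1 w)

/-- The Coons volume built from blending functions `F₀, F₁` and six faces
`S₁, …, S₆` (face–edge–corner inclusion/exclusion formula). -/
noncomputable def coonsVolume (F₀ F₁ : ℝ → ℝ)
    (S₁ S₂ S₃ S₄ S₅ S₆ : ℝ → ℝ → EuclideanSpace ℝ (Fin 3))
    (u v w : ℝ) : EuclideanSpace ℝ (Fin 3) :=
  F₀ u • S₆ v w + F₁ u • S₅ v w + F₀ v • S₃ u w + F₁ v • S₄ u w
    + F₀ w • S₁ u v + F₁ w • S₂ u v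
    - (F₀ u * F₀ v) • S₃ 0 w - (F₀ u * F₁ v) • S₄ 0 w
    - (F₁ u * F₀ v) • S₃ 1 w - (F₁ u * F₁ v) • S₄ 1 w
    - (F₀ v * F₀ w) • S₁ u 0 - (F₀ v * F₁ w) • S₂ u 0
    - (F₁ v * F₀ w) • S₁ u 1 - (F₁ v * F₁ w) • S₂ u 1
    - (F₀ u * F₀ w) • S₁ 0 v - (F₀ u * F₁ w) • S₂ 0 v
    - (F₁ u * F₀ w) • S₁ 1 v - (F₁ u * F₁ w) • S₂ 1 v
    + (F₀ u * F₀ v * F₀ w) • S₃ 0 0 + (F₀ u * F₀ v * F₁ w) • S₃ 0 1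
    + (F₀ u * F₁ v * F₀ w) • S₄ 0 0 + (F₀ u * F₁ v * F₁ w) • S₄ 0 1
    + (F₁ u * F₀ v * F₀ w) • S₃ 1 0 + (F₁ u * F₀ v * F₁ w) • S₃ 1 1
    + (F₁ u * F₁ v * F₀ w) • S₄ 1 0 + (F₁ u * F₁ v * F₁ w) • S₄ 1 1

/-!
On the face `w = 0` the cardinal conditions `F₀ 0 = 1`, `F₁ 0 = 0` kill every term carrying
`F₁ w`. Of what is left, the terms of the four side faces are cancelled by the `uw`- and
`vw`-edge terms through the edge-compatibility relations, and the `uv`-edge terms cancel the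
corner terms. The other five faces are the same computation, except that on the faces `u = c`
and `v = c` the corner points must first be matched with the edge curves, since the formula
reads them off `S₃` and `S₄`.
-/

section CoonsFaces

variable {F₀ F₁ : ℝ → ℝ} {S₁ S₂ S₃ S₄ S₅ S₆ : ℝ → ℝ → EuclideanSpace ℝ (Fin 3)} {u v w : ℝ}

theorem coonsVolume_w_zero (hF₀ : F₀ 0 = 1) (hF₁ : F₁ 0 = 0)
    (h₁₃ : S₁ u 0 = S₃ u 0) (h₁₄ : S₁ u 1 = S₄ u 0)
    (h₁₆ : S₁ 0 v = S₆ v 0) (h₁₅ : S₁ 1 v = S₅ v 0) :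
    coonsVolume F₀ F₁ S₁ S₂ S₃ S₄ S₅ S₆ u v 0 = S₁ u v := by
  simp only [coonsVolume, hF₀, hF₁, ← h₁₃, ← h₁₄, ← h₁₆, ← h₁₅]
  module

theorem coonsVolume_w_one (hF₀ : F₀ 1 = 0) (hF₁ : F₁ 1 = 1)
    (h₂₃ : S₂ u 0 = S₃ u 1) (h₂₄ : S₂ u 1 = S₄ u 1)
    (h₂₆ : S₂ 0 v = S₆ v 1) (h₂₅ : S₂ 1 v = S₅ v 1) :
    coonsVolume F₀ F₁ S₁ S₂ S₃ S₄ S₅ S₆ u v 1 = S₂ u v := by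
  simp only [coonsVolume, hF₀, hF₁, ← h₂₃, ← h₂₄, ← h₂₆, ← h₂₅]
  module

theorem coonsVolume_v_zero (hF₀ : F₀ 0 = 1) (hF₁ : F₁ 0 = 0)
    (h₃₆ : S₃ 0 w = S₆ 0 w) (h₃₅ : S₃ 1 w = S₅ 0 w)
    (h₀₀ : S₁ 0 0 = S₃ 0 0) (h₁₀ : S₁ 1 0 = S₃ 1 0)
    (h₀₁ : S₂ 0 0 = S₃ 0 1) (h₁₁ : S₂ 1 0 = S₃ 1 1) :
    coonsVolume F₀ F₁ S₁ S₂ S₃ S₄ S₅ S₆ u 0 w = S₃ u w := by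
  simp only [coonsVolume, hF₀, hF₁, ← h₃₆, ← h₃₅, h₀₀, h₁₀, h₀₁, h₁₁]
  module

theorem coonsVolume_v_one (hF₀ : F₀ 1 = 0) (hF₁ : F₁ 1 = 1)
    (h₄₆ : S₄ 0 w = S₆ 1 w) (h₄₅ : S₄ 1 w = S₅ 1 w)
    (h₀₀ : S₁ 0 1 = S₄ 0 0) (h₁₀ : S₁ 1 1 = S₄ 1 0)
    (h₀₁ : S₂ 0 1 = S₄ 0 1) (h₁₁ : S₂ 1 1 = S₄ 1 1) :
    coonsVolume F₀ F₁ S₁ S₂ S₃ S₄ S₅ S₆ u 1 w = S₄ u w := by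
  simp only [coonsVolume, hF₀, hF₁, ← h₄₆, ← h₄₅, h₀₀, h₁₀, h₀₁, h₁₁]
  module

theorem coonsVolume_u_zero (hF₀ : F₀ 0 = 1) (hF₁ : F₁ 0 = 0)
    (h₀₀ : S₁ 0 0 = S₃ 0 0) (h₁₀ : S₁ 0 1 = S₄ 0 0)
    (h₀₁ : S₂ 0 0 = S₃ 0 1) (h₁₁ : S₂ 0 1 = S₄ 0 1) :
    coonsVolume F₀ F₁ S₁ S₂ S₃ S₄ S₅ S₆ 0 v w = S₆ v w := by
  simp only [coonsVolume, hF₀, hF₁, h₀₀, h₁₀, h₀₁, h₁₁]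
  module

theorem coonsVolume_u_one (hF₀ : F₀ 1 = 0) (hF₁ : F₁ 1 = 1)
    (h₀₀ : S₁ 1 0 = S₃ 1 0) (h₁₀ : S₁ 1 1 = S₄ 1 0)
    (h₀₁ : S₂ 1 0 = S₃ 1 1) (h₁₁ : S₂ 1 1 = S₄ 1 1) :
    coonsVolume F₀ F₁ S₁ S₂ S₃ S₄ S₅ S₆ 1 v w = S₅ v w := by
  simp only [coonsVolume, hF₀, hF₁, h₀₀, h₁₀, h₀₁, h₁₁]
  module

end CoonsFaces

theorem coonsVolume_interpolates_faces_general
    (F₀ F₁ : ℝ → ℝ)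
    (hF₀0 : F₀ 0 = 1) (hF₀1 : F₀ 1 = 0) (hF₁0 : F₁ 0 = 0) (hF₁1 : F₁ 1 = 1)
    (S₁ S₂ S₃ S₄ S₅ S₆ : ℝ → ℝ → EuclideanSpace ℝ (Fin 3))
    (hcompat : EdgeCompat S₁ S₂ S₃ S₄ S₅ S₆) :
    ∀ u ∈ Set.Icc (0:ℝ) 1, ∀ v ∈ Set.Icc (0:ℝ) 1, ∀ w ∈ Set.Icc (0:ℝ) 1,
      coonsVolume F₀ F₁ S₁ S₂ S₃ S₄ S₅ S₆ u v 0 = S₁ u v ∧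
      coonsVolume F₀ F₁ S₁ S₂ S₃ S₄ S₅ S₆ u v 1 = S₂ u v ∧
      coonsVolume F₀ F₁ S₁ S₂ S₃ S₄ S₅ S₆ u 0 w = S₃ u w ∧
      coonsVolume F₀ F₁ S₁ S₂ S₃ S₄ S₅ S₆ u 1 w = S₄ u w ∧
      coonsVolume F₀ F₁ S₁ S₂ S₃ S₄ S₅ S₆ 1 v w = S₅ v w ∧
      coonsVolume F₀ F₁ S₁ S₂ S₃ S₄ S₅ S₆ 0 v w = S₆ v w := by
  obtain ⟨h13, h14, h23, h24, h16, h15, h26, h25, h36, h35, h46, h45⟩ := hcompat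
  have m0 : (0:ℝ) ∈ Set.Icc (0:ℝ) 1 := Set.left_mem_Icc.2 zero_le_one
  have m1 : (1:ℝ) ∈ Set.Icc (0:ℝ) 1 := Set.right_mem_Icc.2 zero_le_one
  intro u hu v hv w hw
  exact ⟨coonsVolume_w_zero hF₀0 hF₁0 (h13 u hu) (h14 u hu) (h16 v hv) (h15 v hv),
    coonsVolume_w_one hF₀1 hF₁1 (h23 u hu) (h24 u hu) (h26 v hv) (h25 v hv),
    coonsVolume_v_zero hF₀0 hF₁0 (h36 w hw) (h35 w hw) (h13 0 m0) (h13 1 m1)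
      (h23 0 m0) (h23 1 m1),
    coonsVolume_v_one hF₀1 hF₁1 (h46 w hw) (h45 w hw) (h14 0 m0) (h14 1 m1)
      (h24 0 m0) (h24 1 m1),
    coonsVolume_u_one hF₀1 hF₁1 (h13 1 m1) (h14 1 m1) (h23 1 m1) (h24 1 m1),
    coonsVolume_u_zero hF₀0 hF₁0 (h13 0 m0) (h14 0 m0) (h23 0 m0) (h24 0 m0)⟩

/-- the Coons volume interpolates all six boundary faces. -/
theorem coonsVolume_interpolates_faces
    (F₀ F₁ : ℝ → ℝ)
    (hsum : ∀ t ∈ Set.Icc (0:ℝ) 1, F₀ t + F₁ t = 1)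
    (hF₀0 : F₀ 0 = 1) (hF₀1 : F₀ 1 = 0) (hF₁0 : F₁ 0 = 0) (hF₁1 : F₁ 1 = 1)
    (S₁ S₂ S₃ S₄ S₅ S₆ : ℝ → ℝ → EuclideanSpace ℝ (Fin 3))
    (hcompat : EdgeCompat S₁ S₂ S₃ S₄ S₅ S₆) :
    ∀ u ∈ Set.Icc (0:ℝ) 1, ∀ v ∈ Set.Icc (0:ℝ) 1, ∀ w ∈ Set.Icc (0:ℝ) 1,
      coonsVolume F₀ F₁ S₁ S₂ S₃ S₄ S₅ S₆ u v 0 = S₁ u v ∧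
      coonsVolume F₀ F₁ S₁ S₂ S₃ S₄ S₅ S₆ u v 1 = S₂ u v ∧
      coonsVolume F₀ F₁ S₁ S₂ S₃ S₄ S₅ S₆ u 0 w = S₃ u w ∧
      coonsVolume F₀ F₁ S₁ S₂ S₃ S₄ S₅ S₆ u 1 w = S₄ u w ∧
      coonsVolume F₀ F₁ S₁ S₂ S₃ S₄ S₅ S₆ 1 v w = S₅ v w ∧
      coonsVolume F₀ F₁ S₁ S₂ S₃ S₄ S₅ S₆ 0 v w = S₆ v w :=
  coonsVolume_interpolates_faces_general F₀ F₁ hF₀0 hF₀1 hF₁0 hF₁1 S₁ S₂ S₃ S₄ S₅ S₆ hcompat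
end

section
/- (Corollary 2) Let A, D, E, F, G, H ∈ ℝ³ satisfy D − A = H − E, E − A = H − D, and H − G = E − F, and suppose det[H−E, H−G, H−D] > 0. Let T : [0,1]³ → ℝ³ be a differentiable map whose partial derivatives satisfy, at every (u,v,w) ∈ [0,1]³: ∂T/∂u = (2−v−w)(H−E) + (v+w−1)(D−A), ∂T/∂v = (1−w+u)(H−G) + (w−u)(E−F), ∂T/∂w = (1−v+u)(H−D) + (v−u)(E−A). Then the Jacobian determinant of T is constant and equal to det[H−E, H−G, H−D] > 0 at every point of [0,1]³; in particular T is regular. -/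
theorem HasDerivAt.deriv_eq_of_combo_self {𝕜 F : Type*} [NontriviallyNormedField 𝕜]
    [NormedAddCommGroup F] [NormedSpace 𝕜 F] {f : 𝕜 → F} {a b t : 𝕜} {x : F}
    (hf : HasDerivAt f (a • x + b • x) t) (hab : a + b = 1) :
    _root_.deriv f t = x :=
  hf.deriv.trans (Convex.combo_self hab x)

/-- Corollary 2: a Coons volume over a hexahedron whose left face
`A D H E` is a parallelogram and with `H − G = E − F` has constant positive
Jacobian determinant `det[H−E, H−G, H−D]`; in particular it is regular. -/
theorem coons_bilinear_jacobian_constant_pos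
    (A D E F G H : EuclideanSpace ℝ (Fin 3))
    (h₁ : D - A = H - E) (h₂ : E - A = H - D) (h₃ : H - G = E - F)
    (hdet : 0 < det3 (H - E) (H - G) (H - D))
    (T : ℝ → ℝ → ℝ → EuclideanSpace ℝ (Fin 3))
    (hdu : ∀ u ∈ Set.Icc (0:ℝ) 1, ∀ v ∈ Set.Icc (0:ℝ) 1, ∀ w ∈ Set.Icc (0:ℝ) 1,
      HasDerivAt (fun t => T t v w)
        ((2 - v - w) • (H - E) + (v + w - 1) • (D - A)) u)
    (hdv : ∀ u ∈ Set.Icc (0:ℝ) 1, ∀ v ∈ Set.Icc (0:ℝ) 1, ∀ w ∈ Set.Icc (0:ℝ) 1,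
      HasDerivAt (fun t => T u t w)
        ((1 - w + u) • (H - G) + (w - u) • (E - F)) v)
    (hdw : ∀ u ∈ Set.Icc (0:ℝ) 1, ∀ v ∈ Set.Icc (0:ℝ) 1, ∀ w ∈ Set.Icc (0:ℝ) 1,
      HasDerivAt (fun t => T u v t)
        ((1 - v + u) • (H - D) + (v - u) • (E - A)) w) :
    ∀ u ∈ Set.Icc (0:ℝ) 1, ∀ v ∈ Set.Icc (0:ℝ) 1, ∀ w ∈ Set.Icc (0:ℝ) 1,
      det3 (deriv (fun t => T t v w) u) (deriv (fun t => T u t w) v)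
          (deriv (fun t => T u v t) w)
        = det3 (H - E) (H - G) (H - D) ∧
      0 < det3 (deriv (fun t => T t v w) u) (deriv (fun t => T u t w) v)
          (deriv (fun t => T u v t) w) := by
  intro u hu v hv w hw
  have du : deriv (fun t => T t v w) u = H - E := by
    have h := hdu u hu v hv w hw
    rw [h₁] at h
    exact h.deriv_eq_of_combo_self (by ring)
  have dv : deriv (fun t => T u t w) v = H - G := by
    have h := hdv u hu v hv w hw
    rw [← h₃] at h
    exact h.deriv_eq_of_combo_self (by ring)
  have dw : deriv (fun t => T u v t) w = H - D := by
    have h := hdw u hu v hv w hw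
    rw [h₂] at h
    exact h.deriv_eq_of_combo_self (by ring)
  rw [du, dv, dw]
  exact ⟨rfl, hdet⟩
end

section
/- Let n ≥ 1 and let P : {0,…,n}³ → ℝ³ be control points defining the trivariate Bézier map T(u,v,w) = Σ_{i=0}^{n} Σ_{j=0}^{n} Σ_{k=0}^{n} P_{ijk} B_i^n(u) B_j^n(v) B_k^n(w). Then the Jacobian determinant of T admits the Bernstein expansion det[∂T/∂u, ∂T/∂v, ∂T/∂w](u,v,w) = Σ_{p=0}^{3n−1} Σ_{q=0}^{3n−1} Σ_{r=0}^{3n−1} J_{pqr} B_p^{3n−1}(u) B_q^{3n−1}(v) B_r^{3n−1}(w) as an identity of polynomial functions, where J_{pqr} = Σ D(i₁,j₁,k₁,i₂,j₂,k₂,i₃,j₃,k₃) · [C(n−1,i₁)C(n,i₂)C(n,i₃)·C(n,j₁)C(n−1,j₂)C(n,j₃)·C(n,k₁)C(n,k₂)C(n−1,k₃)] / [C(3n−1,p)·C(3n−1,q)·C(3n−1,r)], the sum being over all indices with i₁+i₂+i₃ = p, j₁+j₂+j₃ = q, k₁+k₂+k₃ = r, 0 ≤ i₁ ≤ n−1,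 0 ≤ j₂ ≤ n−1, 0 ≤ k₃ ≤ n−1, and all other indices in {0,…,n}, and D(i₁,j₁,k₁,i₂,j₂,k₂,i₃,j₃,k₃) = n³ det[P_{i₁+1,j₁,k₁} − P_{i₁,j₁,k₁}, P_{i₂,j₂+1,k₂} − P_{i₂,j₂,k₂}, P_{i₃,j₃,k₃+1} − P_{i₃,j₃,k₃}]. -/
/-- The Bernstein basis polynomial `B_i^n(t) = C(n,i) tⁱ (1−t)^{n−i}` as a real
function. -/
noncomputable def bern (n i : ℕ) (t : ℝ) : ℝ :=
  (n.choose i : ℝ) * t ^ i * (1 - t) ^ (n - i)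

/-- The trivariate Bézier volume of degree `(n,n,n)` with control points `P`. -/
noncomputable def bezierVolume (n : ℕ) (P : ℕ → ℕ → ℕ → EuclideanSpace ℝ (Fin 3))
    (u v w : ℝ) : EuclideanSpace ℝ (Fin 3) :=
  ∑ i ∈ Finset.range (n + 1), ∑ j ∈ Finset.range (n + 1), ∑ k ∈ Finset.range (n + 1),
    (bern n i u * bern n j v * bern n k w) • P i j k

/-- `D(i₁,j₁,k₁,i₂,j₂,k₂,i₃,j₃,k₃) = n³ det[ΔᵘP, ΔᵛP, ΔʷP]`. -/
noncomputable def Dcoef (n : ℕ) (P : ℕ → ℕ → ℕ → EuclideanSpace ℝ (Fin 3))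
    (i₁ j₁ k₁ i₂ j₂ k₂ i₃ j₃ k₃ : ℕ) : ℝ :=
  (n : ℝ) ^ 3 *
    det3 (P (i₁ + 1) j₁ k₁ - P i₁ j₁ k₁) (P i₂ (j₂ + 1) k₂ - P i₂ j₂ k₂)
      (P i₃ j₃ (k₃ + 1) - P i₃ j₃ k₃)

/-- The Bézier coefficients `J_{pqr}` of the Jacobian determinant of the trivariate
Bézier volume of degree `n` with control points `P`. -/
noncomputable def Jcoef (n : ℕ) (P : ℕ → ℕ → ℕ → EuclideanSpace ℝ (Fin 3))
    (p q r : ℕ) : ℝ :=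
  ∑ i₁ ∈ Finset.range n, ∑ i₂ ∈ Finset.range (n + 1), ∑ i₃ ∈ Finset.range (n + 1),
  ∑ j₁ ∈ Finset.range (n + 1), ∑ j₂ ∈ Finset.range n, ∑ j₃ ∈ Finset.range (n + 1),
  ∑ k₁ ∈ Finset.range (n + 1), ∑ k₂ ∈ Finset.range (n + 1), ∑ k₃ ∈ Finset.range n,
    if i₁ + i₂ + i₃ = p ∧ j₁ + j₂ + j₃ = q ∧ k₁ + k₂ + k₃ = r then
      Dcoef n P i₁ j₁ k₁ i₂ j₂ k₂ i₃ j₃ k₃ *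
        (((n - 1).choose i₁ * n.choose i₂ * n.choose i₃ * n.choose j₁ *
            (n - 1).choose j₂ * n.choose j₃ * n.choose k₁ * n.choose k₂ *
            (n - 1).choose k₃ : ℕ) : ℝ) /
        (((3 * n - 1).choose p * (3 * n - 1).choose q * (3 * n - 1).choose r : ℕ) : ℝ)
    else 0

/-!
By the Bézier derivative formula, each partial derivative of `T` is again a tensor-product
Bernstein sum, of degree `n - 1` in its own variable and `n` in the other two, whose
coefficients are forward differences of `P`. Expanding the determinant trilinearly, every
term carries in each variable a product of three Bernstein polynomials of degrees
`n - 1, n, n` (in some order), and the product identity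
`B_i^a B_j^b B_k^c = C(a,i) C(b,j) C(c,k) / C(a+b+c, i+j+k) · B_{i+j+k}^{a+b+c}` turns it
into a single Bernstein polynomial of degree `3n - 1`. Grouping the terms by
`(p, q, r) = (i₁ + i₂ + i₃, j₁ + j₂ + j₃, k₁ + k₂ + k₃)` gives the coefficients `J_{pqr}`.
-/

open Finset

section Det3

open Matrix

lemma det3_eq_dotProduct_cross (a b c : EuclideanSpace ℝ (Fin 3)) :
    det3 a b c = a.ofLp ⬝ᵥ (b.ofLp ⨯₃ c.ofLp) := by
  rw [triple_product_eq_det, det3, ← det_transpose]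
  congr 1
  ext i j
  fin_cases i <;> fin_cases j <;> rfl

lemma det3_sum_sum_sum {α β γ : Type*} (A : Finset α) (B : Finset β) (C : Finset γ)
    (f : α → EuclideanSpace ℝ (Fin 3)) (g : β → EuclideanSpace ℝ (Fin 3))
    (h : γ → EuclideanSpace ℝ (Fin 3)) :
    det3 (∑ a ∈ A, f a) (∑ b ∈ B, g b) (∑ c ∈ C, h c)
      = ∑ a ∈ A, ∑ b ∈ B, ∑ c ∈ C, det3 (f a) (g b) (h c) := by
  rw [det3_eq_dotProduct_cross, WithLp.ofLp_sum, sum_dotProduct]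
  simp only [det3_eq_dotProduct_cross, WithLp.ofLp_sum, map_sum, LinearMap.sum_apply,
    dotProduct_sum]
  exact sum_congr rfl fun _ _ => sum_comm

lemma det3_smul_smul_smul (x y z : ℝ) (a b c : EuclideanSpace ℝ (Fin 3)) :
    det3 (x • a) (y • b) (z • c) = x * y * z * det3 a b c := by
  simp only [det3_eq_dotProduct_cross, WithLp.ofLp_smul, map_smul, LinearMap.smul_apply,
    smul_dotProduct, dotProduct_smul, smul_eq_mul]
  ring

end Det3

section Bernstein

open Polynomial

lemma bern_eq_eval (n i : ℕ) (t : ℝ) : bern n i t = (bernsteinPolynomial ℝ n i).eval t := by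
  simp [bern, bernsteinPolynomial]

lemma sum_eval_derivative_bernsteinPolynomial_smul {R E : Type*} [CommRing R] [AddCommGroup E]
    [Module R E] (n : ℕ) (X : ℕ → E) (t : R) :
    ∑ i ∈ range (n + 1), (derivative (bernsteinPolynomial R n i)).eval t • X i
      = ∑ i ∈ range n,
          ((n : R) * (bernsteinPolynomial R (n - 1) i).eval t) • (X (i + 1) - X i) := by
  set b : ℕ → R := fun i => n * (bernsteinPolynomial R (n - 1) i).eval t
  have hb_top : b n = 0 := by
    cases n with
    | zero => simp [b]
    | succ m => simp [b, bernsteinPolynomial.eq_zero_of_lt R (Nat.lt_succ_self m)]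
  have hb_shift : ∑ i ∈ range n, b i • X i = ∑ i ∈ range n, b (i + 1) • X (i + 1) + b 0 • X 0 := by
    rw [← sum_range_succ' (fun i => b i • X i), sum_range_succ, hb_top, zero_smul, add_zero]
  rw [sum_range_succ', bernsteinPolynomial.derivative_zero]
  simp only [bernsteinPolynomial.derivative_succ, eval_mul, eval_sub, eval_neg, eval_natCast]
  simp only [smul_sub, sum_sub_distrib, hb_shift, b, mul_sub, sub_smul, neg_mul, neg_smul]
  abel

lemma hasDerivAt_sum_bern_smul {E : Type*} [NormedAddCommGroup E] [NormedSpace ℝ E] (n : ℕ)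
    (X : ℕ → E) (t : ℝ) :
    HasDerivAt (fun s => ∑ i ∈ range (n + 1), bern n i s • X i)
      (∑ i ∈ range n, (n * bern (n - 1) i t) • (X (i + 1) - X i)) t := by
  simp only [bern_eq_eval, ← sum_eval_derivative_bernsteinPolynomial_smul]
  exact HasDerivAt.fun_sum fun i _ => ((bernsteinPolynomial ℝ n i).hasDerivAt t).smul_const (X i)

end Bernstein

-- No side conditions: if an index exceeds its degree, both sides vanish (the divisor may be `0`).
lemma bern_mul_bern_mul_bern (a b c i j k : ℕ) (t : ℝ) :
    bern a i t * bern b j t * bern c k t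
      = ((a.choose i * b.choose j * c.choose k : ℕ) : ℝ) / ((a + b + c).choose (i + j + k) : ℕ)
          * bern (a + b + c) (i + j + k) t := by
  by_cases h : i ≤ a ∧ j ≤ b ∧ k ≤ c
  · have hC : (((a + b + c).choose (i + j + k) : ℕ) : ℝ) ≠ 0 := by
      exact_mod_cast (Nat.choose_pos (by omega)).ne'
    have hsub : a + b + c - (i + j + k) = (a - i) + (b - j) + (c - k) := by omega
    rw [div_mul_eq_mul_div, eq_div_iff hC, bern, bern, bern, bern, hsub]
    push_cast
    ring
  · rcases (by omega : a < i ∨ b < j ∨ c < k) with h | h | h <;>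
      simp [bern, Nat.choose_eq_zero_of_lt h]

lemma bern_partial_coeffs_mul (n i₁ i₂ i₃ j₁ j₂ j₃ k₁ k₂ k₃ : ℕ) (u v w d : ℝ) :
    n * bern (n - 1) i₁ u * bern n j₁ v * bern n k₁ w *
        (bern n i₂ u * (n * bern (n - 1) j₂ v) * bern n k₂ w) *
        (bern n i₃ u * bern n j₃ v * (n * bern (n - 1) k₃ w)) * d
      = (n : ℝ) ^ 3 * d *
          (((n - 1).choose i₁ * n.choose i₂ * n.choose i₃ * n.choose j₁ *
              (n - 1).choose j₂ * n.choose j₃ * n.choose k₁ * n.choose k₂ *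
              (n - 1).choose k₃ : ℕ) : ℝ) /
          (((3 * n - 1).choose (i₁ + i₂ + i₃) * (3 * n - 1).choose (j₁ + j₂ + j₃) *
              (3 * n - 1).choose (k₁ + k₂ + k₃) : ℕ) : ℝ) *
          bern (3 * n - 1) (i₁ + i₂ + i₃) u * bern (3 * n - 1) (j₁ + j₂ + j₃) v *
          bern (3 * n - 1) (k₁ + k₂ + k₃) w := by
  have hu := bern_mul_bern_mul_bern (n - 1) n n i₁ i₂ i₃ u
  have hv := bern_mul_bern_mul_bern n (n - 1) n j₁ j₂ j₃ v
  have hw := bern_mul_bern_mul_bern n n (n - 1) k₁ k₂ k₃ w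
  rw [show n - 1 + n + n = 3 * n - 1 by omega] at hu
  rw [show n + (n - 1) + n = 3 * n - 1 by omega] at hv
  rw [show n + n + (n - 1) = 3 * n - 1 by omega] at hw
  calc _ = (n : ℝ) ^ 3 * d * (bern (n - 1) i₁ u * bern n i₂ u * bern n i₃ u) *
        (bern n j₁ v * bern (n - 1) j₂ v * bern n j₃ v) *
        (bern n k₁ w * bern n k₂ w * bern (n - 1) k₃ w) := by ring
    _ = _ := by
      rw [hu, hv, hw]
      push_cast
      ring

section Bezier

variable (n : ℕ) (P : ℕ → ℕ → ℕ → EuclideanSpace ℝ (Fin 3)) (u v w : ℝ)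

lemma hasDerivAt_bezierVolume_fst :
    HasDerivAt (fun t => bezierVolume n P t v w)
      (∑ i ∈ range n, ∑ j ∈ range (n + 1), ∑ k ∈ range (n + 1),
        (n * bern (n - 1) i u * bern n j v * bern n k w) • (P (i + 1) j k - P i j k)) u := by
  have hf : (fun t => bezierVolume n P t v w) = fun t => ∑ i ∈ range (n + 1), bern n i t •
      ∑ j ∈ range (n + 1), ∑ k ∈ range (n + 1), (bern n j v * bern n k w) • P i j k := by
    ext1 t
    simp only [bezierVolume, smul_sum, smul_smul, mul_assoc]
  rw [hf]
  refine (hasDerivAt_sum_bern_smul n _ u).congr_deriv ?_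
  simp only [smul_sum, ← sum_sub_distrib, smul_sub, smul_smul, mul_assoc]

lemma hasDerivAt_bezierVolume_snd :
    HasDerivAt (fun t => bezierVolume n P u t w)
      (∑ i ∈ range (n + 1), ∑ j ∈ range n, ∑ k ∈ range (n + 1),
        (bern n i u * (n * bern (n - 1) j v) * bern n k w) • (P i (j + 1) k - P i j k)) v := by
  have hf : (fun t => bezierVolume n P u t w) = fun t => ∑ i ∈ range (n + 1),
      ∑ j ∈ range (n + 1), bern n j t •
        ∑ k ∈ range (n + 1), (bern n i u * bern n k w) • P i j k := by
    ext1 t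
    simp only [bezierVolume, smul_sum, smul_smul, mul_comm, mul_left_comm]
  rw [hf]
  refine (HasDerivAt.fun_sum fun i _ => hasDerivAt_sum_bern_smul n _ v).congr_deriv ?_
  simp only [smul_sum, ← sum_sub_distrib, smul_sub, smul_smul, mul_comm, mul_left_comm, mul_assoc]

lemma hasDerivAt_bezierVolume_thd :
    HasDerivAt (fun t => bezierVolume n P u v t)
      (∑ i ∈ range (n + 1), ∑ j ∈ range (n + 1), ∑ k ∈ range n,
        (bern n i u * bern n j v * (n * bern (n - 1) k w)) • (P i j (k + 1) - P i j k)) w := by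
  have hf : (fun t => bezierVolume n P u v t) = fun t => ∑ i ∈ range (n + 1),
      ∑ j ∈ range (n + 1), ∑ k ∈ range (n + 1),
        bern n k t • (bern n i u * bern n j v) • P i j k := by
    ext1 t
    simp only [bezierVolume, smul_smul, mul_comm]
  rw [hf]
  refine (HasDerivAt.fun_sum fun i _ => HasDerivAt.fun_sum fun j _ =>
    hasDerivAt_sum_bern_smul n _ w).congr_deriv ?_
  simp only [smul_sub, smul_smul, mul_comm]

end Bezier

lemma sum_sum_sum_eq_sum_product {M α β γ : Type*} [AddCommMonoid M] (s : Finset α)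
    (t : Finset β) (r : Finset γ) (f : α → β → γ → M) :
    ∑ x ∈ s, ∑ y ∈ t, ∑ z ∈ r, f x y z = ∑ x ∈ s ×ˢ t ×ˢ r, f x.1 x.2.1 x.2.2 := by
  simp only [sum_product]

lemma sum_product_ite_eq {M α β γ : Type*} [AddCommMonoid M] [DecidableEq α] [DecidableEq β]
    [DecidableEq γ] {S : Finset (α × β × γ)} {a : α} {b : β} {c : γ} (h : (a, b, c) ∈ S)
    (f : α × β × γ → M) :
    ∑ x ∈ S, (if a = x.1 ∧ b = x.2.1 ∧ c = x.2.2 then f x else 0) = f (a, b, c) := by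
  have hcond : ∀ x : α × β × γ, (a = x.1 ∧ b = x.2.1 ∧ c = x.2.2) ↔ (a, b, c) = x := by
    simp [Prod.ext_iff]
  simp only [hcond, sum_ite_eq, if_pos h]

lemma sum_sum_sum_mul_sum_ite_eq (n : ℕ) (B₁ B₂ B₃ : ℕ → ℝ)
    (G : ℕ → ℕ → ℕ → ℕ → ℕ → ℕ → ℕ → ℕ → ℕ → ℕ → ℕ → ℕ → ℝ) :
    ∑ p ∈ range (3 * n), ∑ q ∈ range (3 * n), ∑ r ∈ range (3 * n),
      (∑ i₁ ∈ range n, ∑ i₂ ∈ range (n + 1), ∑ i₃ ∈ range (n + 1),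
        ∑ j₁ ∈ range (n + 1), ∑ j₂ ∈ range n, ∑ j₃ ∈ range (n + 1),
        ∑ k₁ ∈ range (n + 1), ∑ k₂ ∈ range (n + 1), ∑ k₃ ∈ range n,
          if i₁ + i₂ + i₃ = p ∧ j₁ + j₂ + j₃ = q ∧ k₁ + k₂ + k₃ = r then
            G i₁ i₂ i₃ j₁ j₂ j₃ k₁ k₂ k₃ p q r
          else 0) * B₁ p * B₂ q * B₃ r
    = ∑ i₁ ∈ range n, ∑ i₂ ∈ range (n + 1), ∑ i₃ ∈ range (n + 1),
      ∑ j₁ ∈ range (n + 1), ∑ j₂ ∈ range n, ∑ j₃ ∈ range (n + 1),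
      ∑ k₁ ∈ range (n + 1), ∑ k₂ ∈ range (n + 1), ∑ k₃ ∈ range n,
        G i₁ i₂ i₃ j₁ j₂ j₃ k₁ k₂ k₃ (i₁ + i₂ + i₃) (j₁ + j₂ + j₃) (k₁ + k₂ + k₃) *
          B₁ (i₁ + i₂ + i₃) * B₂ (j₁ + j₂ + j₃) * B₃ (k₁ + k₂ + k₃) := by
  -- A single index over triples can be moved inward by `sum_comm` without ever meeting a sum
  -- of its own kind, so the rewriting terminates.
  rw [sum_sum_sum_eq_sum_product]
  simp only [↓sum_mul, ↓ite_mul, zero_mul]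
  simp only [↓sum_comm (s := range (3 * n) ×ˢ range (3 * n) ×ˢ range (3 * n))]
  simp (disch := (simp only [mem_product, mem_range] at *; omega)) only [sum_product_ite_eq]

lemma sum_Jcoef_mul_bern (n : ℕ) (P : ℕ → ℕ → ℕ → EuclideanSpace ℝ (Fin 3)) (u v w : ℝ) :
    ∑ p ∈ range (3 * n), ∑ q ∈ range (3 * n), ∑ r ∈ range (3 * n),
      Jcoef n P p q r * bern (3 * n - 1) p u * bern (3 * n - 1) q v * bern (3 * n - 1) r w
    = ∑ i₁ ∈ range n, ∑ i₂ ∈ range (n + 1), ∑ i₃ ∈ range (n + 1),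
      ∑ j₁ ∈ range (n + 1), ∑ j₂ ∈ range n, ∑ j₃ ∈ range (n + 1),
      ∑ k₁ ∈ range (n + 1), ∑ k₂ ∈ range (n + 1), ∑ k₃ ∈ range n,
        Dcoef n P i₁ j₁ k₁ i₂ j₂ k₂ i₃ j₃ k₃ *
          (((n - 1).choose i₁ * n.choose i₂ * n.choose i₃ * n.choose j₁ *
              (n - 1).choose j₂ * n.choose j₃ * n.choose k₁ * n.choose k₂ *
              (n - 1).choose k₃ : ℕ) : ℝ) /
          (((3 * n - 1).choose (i₁ + i₂ + i₃) * (3 * n - 1).choose (j₁ + j₂ + j₃) *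
              (3 * n - 1).choose (k₁ + k₂ + k₃) : ℕ) : ℝ) *
          bern (3 * n - 1) (i₁ + i₂ + i₃) u * bern (3 * n - 1) (j₁ + j₂ + j₃) v *
          bern (3 * n - 1) (k₁ + k₂ + k₃) w :=
  sum_sum_sum_mul_sum_ite_eq n _ _ _ _

theorem bezier_jacobian_bernstein_expansion_general (n : ℕ)
    (P : ℕ → ℕ → ℕ → EuclideanSpace ℝ (Fin 3)) (u v w : ℝ) :
    det3 (deriv (fun t => bezierVolume n P t v w) u)
        (deriv (fun t => bezierVolume n P u t w) v)
        (deriv (fun t => bezierVolume n P u v t) w)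
      = ∑ p ∈ Finset.range (3 * n), ∑ q ∈ Finset.range (3 * n),
          ∑ r ∈ Finset.range (3 * n),
            Jcoef n P p q r * bern (3 * n - 1) p u * bern (3 * n - 1) q v *
              bern (3 * n - 1) r w := by
  rw [(hasDerivAt_bezierVolume_fst n P u v w).deriv, (hasDerivAt_bezierVolume_snd n P u v w).deriv,
    (hasDerivAt_bezierVolume_thd n P u v w).deriv, sum_Jcoef_mul_bern]
  simp only [det3_sum_sum_sum]
  simp only [det3_smul_smul_smul, bern_partial_coeffs_mul]
  rfl

/-- Bernstein expansion of the Jacobian determinant of a trivariate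
Bézier volume. -/
theorem bezier_jacobian_bernstein_expansion (n : ℕ) (hn : 1 ≤ n)
    (P : ℕ → ℕ → ℕ → EuclideanSpace ℝ (Fin 3)) (u v w : ℝ) :
    det3 (deriv (fun t => bezierVolume n P t v w) u)
        (deriv (fun t => bezierVolume n P u t w) v)
        (deriv (fun t => bezierVolume n P u v t) w)
      = ∑ p ∈ Finset.range (3 * n), ∑ q ∈ Finset.range (3 * n),
          ∑ r ∈ Finset.range (3 * n),
            Jcoef n P p q r * bern (3 * n - 1) p u * bern (3 * n - 1) q v *
              bern (3 * n - 1) r w :=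
  bezier_jacobian_bernstein_expansion_general n P u v w
end

section
/- (Theorem 3) Let d ∈ ℕ and let g : ℝ³ → ℝ be a polynomial of degree at most d in each of its three variables such that g(u,v,w) ≥ ρ > 0 for all (u,v,w) ∈ [0,1]³. Then there exists σ₀ ∈ ℕ such that for every σ ≥ σ₀ and all i, j, k ∈ {0,…,σ−1}, the tensor-product Bernstein coefficients of g on the subcube [i/σ,(i+1)/σ] × [j/σ,(j+1)/σ] × [k/σ,(k+1)/σ] are all strictly positive; that is, if coefficients c_{pqr} ∈ ℝ (p,q,r ∈ {0,…,d}) satisfy g((i+u)/σ, (j+v)/σ, (k+w)/σ) = Σ_{p=0}^{d} Σ_{q=0}^{d} Σ_{r=0}^{d} c_{pqr} B_p^d(u) B_q^d(v) B_r^d(w) for all (u,v,w), then c_{pqr} > 0 for all p, q, r. In particular, if T is a regular trivariate Bézier volume of degree n (so its Jacobian determinant g has degree at most 3n−1 in each variable and is strictly positive on [0,1]³), then for sufficiently fine uniform subdivision all Bézier coefficients of the Jacobian determinant on every sub-block share the same (positive) sign. -/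
open Finset

theorem bern_div_one_add {d p : ℕ} (hp : p ≤ d) {t : ℝ} (ht : 0 < t) :
    bern d p (t / (1 + t)) = d.choose p * t ^ p / (1 + t) ^ d := by
  have h1 : 1 - t / (1 + t) = (1 + t)⁻¹ := by field_simp; ring
  rw [bern, h1, div_pow, inv_pow, ← Nat.add_sub_cancel' hp, pow_add, Nat.add_sub_cancel_left]
  field_simp

open Polynomial in
theorem eq_of_sum_mul_bern_eq {d p : ℕ} {e e' : ℕ → ℝ}
    (h : ∀ x, ∑ p ∈ range (d + 1), e p * bern d p x = ∑ p ∈ range (d + 1), e' p * bern d p x)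
    (hp : p ≤ d) : e p = e' p := by
  set P : ℝ[X] := ∑ p ∈ range (d + 1), C ((e p - e' p) * d.choose p) * X ^ p
  -- `x = t / (1 + t)` turns `B_p^d(x)` into the monomial `C(d,p) tᵖ` up to the factor `(1 + t)⁻ᵈ`
  have hroot : Set.Ioi 0 ⊆ {t | P.IsRoot t} := by
    intro t (ht : 0 < t)
    have hP : P.eval t / (1 + t) ^ d = ∑ p ∈ range (d + 1), e p * bern d p (t / (1 + t))
        - ∑ p ∈ range (d + 1), e' p * bern d p (t / (1 + t)) := by
      simp only [P, ← sum_sub_distrib, eval_finsetSum, eval_mul, eval_C, eval_pow, eval_X, sum_div]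
      refine sum_congr rfl fun p hp => ?_
      rw [bern_div_one_add (Nat.lt_succ_iff.1 (mem_range.1 hp)) ht]
      ring
    rw [h, sub_self, div_eq_zero_iff] at hP
    exact hP.resolve_right (by positivity)
  have hP : P.coeff p = 0 := by
    rw [eq_zero_of_infinite_isRoot P ((Set.Ioi_infinite 0).mono hroot), coeff_zero]
  simpa only [P, finsetSum_coeff, coeff_C_mul_X_pow, sum_ite_eq, mem_range, Nat.lt_succ_of_le hp,
    if_true, mul_eq_zero, Nat.cast_eq_zero, (Nat.choose_pos hp).ne', or_false, sub_eq_zero] using hP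

theorem eq_of_sum3_mul_bern_eq {d p q r : ℕ} {c c' : ℕ → ℕ → ℕ → ℝ}
    (h : ∀ u v w, ∑ p ∈ range (d + 1), ∑ q ∈ range (d + 1), ∑ r ∈ range (d + 1),
        c p q r * bern d p u * bern d q v * bern d r w
      = ∑ p ∈ range (d + 1), ∑ q ∈ range (d + 1), ∑ r ∈ range (d + 1),
        c' p q r * bern d p u * bern d q v * bern d r w)
    (hp : p ≤ d) (hq : q ≤ d) (hr : r ≤ d) : c p q r = c' p q r := by
  have hnest : ∀ (c : ℕ → ℕ → ℕ → ℝ) u v w,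
      ∑ p ∈ range (d + 1), ∑ q ∈ range (d + 1), ∑ r ∈ range (d + 1),
        c p q r * bern d p u * bern d q v * bern d r w
      = ∑ p ∈ range (d + 1), (∑ q ∈ range (d + 1),
          (∑ r ∈ range (d + 1), c p q r * bern d r w) * bern d q v) * bern d p u := by
    intro c u v w
    simp only [sum_mul]
    exact sum_congr rfl fun _ _ => sum_congr rfl fun _ _ => sum_congr rfl fun _ _ => by ring
  have hu : ∀ v w, ∑ q ∈ range (d + 1), (∑ r ∈ range (d + 1), c p q r * bern d r w) * bern d q v
      = ∑ q ∈ range (d + 1), (∑ r ∈ range (d + 1), c' p q r * bern d r w) * bern d q v :=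
    fun v w => eq_of_sum_mul_bern_eq (fun u => by simpa only [hnest] using h u v w) hp
  have hv : ∀ w, ∑ r ∈ range (d + 1), c p q r * bern d r w
      = ∑ r ∈ range (d + 1), c' p q r * bern d r w :=
    fun w => eq_of_sum_mul_bern_eq (fun v => hu v w) hq
  exact eq_of_sum_mul_bern_eq hv hr

theorem pow_eq_sum_bern {d k : ℕ} (hk : k ≤ d) (u : ℝ) :
    u ^ k = ∑ p ∈ range (d + 1), (p.choose k / d.choose k : ℝ) * bern d p u := by
  obtain ⟨n, rfl⟩ := Nat.exists_eq_add_of_le hk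
  have hlow : ∑ p ∈ range k, (p.choose k / (k + n).choose k : ℝ) * bern (k + n) p u = 0 :=
    sum_eq_zero fun p hp => by simp [Nat.choose_eq_zero_of_lt (mem_range.1 hp)]
  rw [add_assoc, sum_range_add, hlow, zero_add]
  calc u ^ k = u ^ k * (u + (1 - u)) ^ n := by simp
    _ = _ := by
      rw [add_pow, mul_sum]
      refine sum_congr rfl fun m hm => ?_
      have hchoose : ((k + n).choose (k + m) * (k + m).choose k : ℝ)
          = (k + n).choose k * n.choose m := by
        exact_mod_cast (Nat.choose_mul (n := k + n) (Nat.le_add_right k m)).trans (by simp)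
      have hpos : ((k + n).choose k : ℝ) ≠ 0 := by exact_mod_cast (Nat.choose_pos hk).ne'
      rw [bern, Nat.add_sub_add_left, pow_add]
      field_simp
      linear_combination -(u ^ k * u ^ m * (1 - u) ^ (n - m)) * hchoose

noncomputable def affinePowBernCoeff (d : ℕ) (x₀ s : ℝ) (α p : ℕ) : ℝ :=
  ∑ k ∈ range (α + 1), α.choose k * x₀ ^ (α - k) * s ^ k * (p.choose k / d.choose k)

theorem affine_pow_eq_sum_bern {d α : ℕ} (hα : α ≤ d) (x₀ s u : ℝ) :
    (x₀ + s * u) ^ α = ∑ p ∈ range (d + 1), affinePowBernCoeff d x₀ s α p * bern d p u := by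
  calc (x₀ + s * u) ^ α
      = ∑ k ∈ range (α + 1), α.choose k * x₀ ^ (α - k) * s ^ k * u ^ k := by
        rw [add_comm, add_pow]
        exact sum_congr rfl fun k _ => by ring
    _ = ∑ k ∈ range (α + 1), ∑ p ∈ range (d + 1),
          α.choose k * x₀ ^ (α - k) * s ^ k * (p.choose k / d.choose k) * bern d p u := by
        refine sum_congr rfl fun k hk => ?_
        rw [pow_eq_sum_bern ((Nat.lt_succ_iff.1 (mem_range.1 hk)).trans hα) u, mul_sum]
        exact sum_congr rfl fun p _ => by ring
    _ = _ := by
        rw [sum_comm]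
        simp only [affinePowBernCoeff, sum_mul]

theorem pow_le_affinePowBernCoeff (d : ℕ) {x₀ s : ℝ} (hx₀ : 0 ≤ x₀) (hs : 0 ≤ s) (α p : ℕ) :
    x₀ ^ α ≤ affinePowBernCoeff d x₀ s α p := by
  rw [affinePowBernCoeff, sum_range_succ']
  simp only [Nat.choose_zero_right, Nat.cast_one, Nat.sub_zero, pow_zero, div_one, mul_one,
    one_mul, le_add_iff_nonneg_left]
  exact sum_nonneg fun k _ => by positivity

theorem affinePowBernCoeff_le_add_pow {d p : ℕ} (hp : p ≤ d) {x₀ s : ℝ} (hx₀ : 0 ≤ x₀)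
    (hs : 0 ≤ s) (α : ℕ) : affinePowBernCoeff d x₀ s α p ≤ (x₀ + s) ^ α := by
  rw [add_comm, add_pow, affinePowBernCoeff]
  refine sum_le_sum fun k _ => ?_
  have hN : (p.choose k / d.choose k : ℝ) ≤ 1 :=
    div_le_one_of_le₀ (by exact_mod_cast Nat.choose_le_choose k hp) (by positivity)
  calc _ ≤ (α.choose k : ℝ) * x₀ ^ (α - k) * s ^ k * 1 := by gcongr
    _ = _ := by ring

theorem sum3_mul_sum_mul_sum_mul_sum {ι κ R : Type*} [CommSemiring R] (s : Finset ι)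
    (t : Finset κ) (A : ι → ι → ι → R) (P Q S : ι → κ → R) (x y z : κ → R) :
    ∑ α ∈ s, ∑ β ∈ s, ∑ γ ∈ s, A α β γ * (∑ p ∈ t, P α p * x p) * (∑ q ∈ t, Q β q * y q)
        * (∑ r ∈ t, S γ r * z r)
      = ∑ p ∈ t, ∑ q ∈ t, ∑ r ∈ t,
          (∑ α ∈ s, ∑ β ∈ s, ∑ γ ∈ s, A α β γ * P α p * Q β q * S γ r) * x p * y q * z r := by
  simp only [mul_sum, sum_mul, ← sum_product']
  refine sum_nbij' (fun ⟨α, β, γ, r, q, p⟩ => (p, q, r, α, β, γ))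
    (fun ⟨p, q, r, α, β, γ⟩ => (α, β, γ, r, q, p)) ?_ ?_ (fun _ _ => rfl) (fun _ _ => rfl) ?_
  · simp only [mem_product]; tauto
  · simp only [mem_product]; tauto
  · intros; ring

def trivariatePoly (d : ℕ) (a : ℕ → ℕ → ℕ → ℝ) (x : ℝ × ℝ × ℝ) : ℝ :=
  ∑ α ∈ range (d + 1), ∑ β ∈ range (d + 1), ∑ γ ∈ range (d + 1),
    a α β γ * x.1 ^ α * x.2.1 ^ β * x.2.2 ^ γ

theorem trivariatePoly_affine_eq_sum_bern (d : ℕ) (a : ℕ → ℕ → ℕ → ℝ) (x₀ y₀ z₀ s u v w : ℝ) :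
    trivariatePoly d a (x₀ + s * u, y₀ + s * v, z₀ + s * w)
      = ∑ p ∈ range (d + 1), ∑ q ∈ range (d + 1), ∑ r ∈ range (d + 1),
          (∑ α ∈ range (d + 1), ∑ β ∈ range (d + 1), ∑ γ ∈ range (d + 1),
            a α β γ * affinePowBernCoeff d x₀ s α p * affinePowBernCoeff d y₀ s β q
              * affinePowBernCoeff d z₀ s γ r) * bern d p u * bern d q v * bern d r w := by
  rw [← sum3_mul_sum_mul_sum_mul_sum, trivariatePoly]
  refine sum_congr rfl fun α hα => sum_congr rfl fun β hβ => sum_congr rfl fun γ hγ => ?_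
  simp only [mem_range, Nat.lt_succ_iff] at hα hβ hγ
  rw [affine_pow_eq_sum_bern hα, affine_pow_eq_sum_bern hβ, affine_pow_eq_sum_bern hγ]

theorem abs_sum_sub_sum_le_sum_sub_sum {ι : Type*} {s : Finset ι} {f f' F F' : ι → ℝ}
    (h : ∀ i ∈ s, |f i - f' i| ≤ F i - F' i) :
    |∑ i ∈ s, f i - ∑ i ∈ s, f' i| ≤ ∑ i ∈ s, F i - ∑ i ∈ s, F' i := by
  rw [← sum_sub_distrib, ← sum_sub_distrib]
  exact (abs_sum_le_sum_abs _ _).trans (sum_le_sum h)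

theorem abs_mul_sub_mul_le_of_le {a b m M : ℝ} (hm : m ≤ b) (hM : b ≤ M) :
    |a * b - a * m| ≤ |a| * M - |a| * m := by
  rw [← mul_sub, ← mul_sub, abs_mul, abs_of_nonneg (sub_nonneg.2 hm)]
  gcongr

theorem abs_bernCoeff_sub_trivariatePoly_le {d p q r : ℕ} {a c : ℕ → ℕ → ℕ → ℝ}
    {x₀ y₀ z₀ s : ℝ} (hx₀ : 0 ≤ x₀) (hy₀ : 0 ≤ y₀) (hz₀ : 0 ≤ z₀) (hs : 0 ≤ s)
    (hc : ∀ u v w, trivariatePoly d a (x₀ + s * u, y₀ + s * v, z₀ + s * w)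
      = ∑ p ∈ range (d + 1), ∑ q ∈ range (d + 1), ∑ r ∈ range (d + 1),
          c p q r * bern d p u * bern d q v * bern d r w)
    (hp : p ≤ d) (hq : q ≤ d) (hr : r ≤ d) :
    |c p q r - trivariatePoly d a (x₀, y₀, z₀)|
      ≤ trivariatePoly d (fun α β γ => |a α β γ|) (x₀ + s, y₀ + s, z₀ + s)
        - trivariatePoly d (fun α β γ => |a α β γ|) (x₀, y₀, z₀) := by
  rw [eq_of_sum3_mul_bern_eq (fun u v w => (hc u v w).symm.trans
    (trivariatePoly_affine_eq_sum_bern d a x₀ y₀ z₀ s u v w)) hp hq hr]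
  refine abs_sum_sub_sum_le_sum_sub_sum fun α _ => abs_sum_sub_sum_le_sum_sub_sum fun β _ =>
    abs_sum_sub_sum_le_sum_sub_sum fun γ _ => ?_
  have hx := pow_le_affinePowBernCoeff d hx₀ hs α p
  have hy := pow_le_affinePowBernCoeff d hy₀ hs β q
  have hz := pow_le_affinePowBernCoeff d hz₀ hs γ r
  have hx' := affinePowBernCoeff_le_add_pow hp hx₀ hs α
  have hy' := affinePowBernCoeff_le_add_pow hq hy₀ hs β
  have hz' := affinePowBernCoeff_le_add_pow hr hz₀ hs γ
  have hx0 := (pow_nonneg hx₀ α).trans hx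
  have hy0 := (pow_nonneg hy₀ β).trans hy
  have hz0 := (pow_nonneg hz₀ γ).trans hz
  have hlow : x₀ ^ α * y₀ ^ β * z₀ ^ γ ≤ affinePowBernCoeff d x₀ s α p
      * affinePowBernCoeff d y₀ s β q * affinePowBernCoeff d z₀ s γ r := by gcongr
  have hup : affinePowBernCoeff d x₀ s α p * affinePowBernCoeff d y₀ s β q
      * affinePowBernCoeff d z₀ s γ r ≤ (x₀ + s) ^ α * (y₀ + s) ^ β * (z₀ + s) ^ γ := by gcongr
  simpa only [mul_assoc] using abs_mul_sub_mul_le_of_le (a := a α β γ) hlow hup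

theorem exists_forall_abs_bernCoeff_sub_trivariatePoly_lt (d : ℕ) (a : ℕ → ℕ → ℕ → ℝ)
    {ε : ℝ} (hε : 0 < ε) :
    ∃ δ > 0, ∀ x₀ ∈ Set.Icc (0 : ℝ) 1, ∀ y₀ ∈ Set.Icc (0 : ℝ) 1, ∀ z₀ ∈ Set.Icc (0 : ℝ) 1,
      ∀ s ∈ Set.Icc (0 : ℝ) 1, s < δ → ∀ c : ℕ → ℕ → ℕ → ℝ,
        (∀ u v w, trivariatePoly d a (x₀ + s * u, y₀ + s * v, z₀ + s * w)
          = ∑ p ∈ range (d + 1), ∑ q ∈ range (d + 1), ∑ r ∈ range (d + 1),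
              c p q r * bern d p u * bern d q v * bern d r w) →
        ∀ p q r, p ≤ d → q ≤ d → r ≤ d → |c p q r - trivariatePoly d a (x₀, y₀, z₀)| < ε := by
  set G := trivariatePoly d fun α β γ => |a α β γ|
  have hG : UniformContinuousOn G (Set.Icc 0 2 ×ˢ Set.Icc 0 2 ×ˢ Set.Icc 0 2) :=
    (isCompact_Icc.prod (isCompact_Icc.prod isCompact_Icc)).uniformContinuousOn_of_continuous
      (by unfold G trivariatePoly; fun_prop)
  obtain ⟨δ, hδ, hGδ⟩ := Metric.uniformContinuousOn_iff.1 hG ε hε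
  refine ⟨δ, hδ, fun x₀ ⟨hx₀, hx₁⟩ y₀ ⟨hy₀, hy₁⟩ z₀ ⟨hz₀, hz₁⟩ s ⟨hs₀, hs₁⟩ hsδ c hc p q r hp hq hr
    => (abs_bernCoeff_sub_trivariatePoly_le hx₀ hy₀ hz₀ hs₀ hc hp hq hr).trans_lt
      ((le_abs_self _).trans_lt (hGδ _ ?_ _ ?_ ?_))⟩
  · refine ⟨⟨?_, ?_⟩, ⟨?_, ?_⟩, ?_, ?_⟩ <;> linarith
  · refine ⟨⟨?_, ?_⟩, ⟨?_, ?_⟩, ?_, ?_⟩ <;> linarith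
  · simpa [Prod.dist_eq, Real.dist_eq, abs_of_nonneg hs₀] using hsδ

/-- Theorem 3: for a trivariate polynomial `g` of degree at most `d`
in each variable (given by its monomial coefficients `a`) with `g ≥ ρ > 0` on the
unit cube, all tensor-product Bernstein coefficients of `g` on every subcube
`[i/σ,(i+1)/σ] × [j/σ,(j+1)/σ] × [k/σ,(k+1)/σ]` of a uniform `σ`-fold subdivision
are strictly positive once the subdivision is fine enough.  In particular, the
Bézier coefficients of the (positive) Jacobian determinant of a regular Bézier
volume share the same positive sign on every sub-block after sufficiently fine
subdivision. -/
theorem subdivided_trivariate_bernstein_coeffs_pos (d : ℕ)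
    (a : ℕ → ℕ → ℕ → ℝ) (g : ℝ → ℝ → ℝ → ℝ)
    (hgpoly : ∀ u v w : ℝ, g u v w
      = ∑ α ∈ Finset.range (d + 1), ∑ β ∈ Finset.range (d + 1),
          ∑ γ ∈ Finset.range (d + 1), a α β γ * u ^ α * v ^ β * w ^ γ)
    (ρ : ℝ) (hρ : 0 < ρ)
    (hg : ∀ u ∈ Set.Icc (0:ℝ) 1, ∀ v ∈ Set.Icc (0:ℝ) 1, ∀ w ∈ Set.Icc (0:ℝ) 1,
      ρ ≤ g u v w) :
    ∃ σ₀ : ℕ, ∀ σ : ℕ, σ₀ ≤ σ → ∀ i j k : ℕ, i < σ → j < σ → k < σ →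
      ∀ c : ℕ → ℕ → ℕ → ℝ,
        (∀ u v w : ℝ,
          g (((i : ℝ) + u) / (σ : ℝ)) (((j : ℝ) + v) / (σ : ℝ))
              (((k : ℝ) + w) / (σ : ℝ))
            = ∑ p ∈ Finset.range (d + 1), ∑ q ∈ Finset.range (d + 1),
                ∑ r ∈ Finset.range (d + 1),
                  c p q r * bern d p u * bern d q v * bern d r w) →
        ∀ p q r : ℕ, p ≤ d → q ≤ d → r ≤ d → 0 < c p q r := by
  have hgP : ∀ u v w, g u v w = trivariatePoly d a (u, v, w) := hgpoly
  obtain ⟨δ, hδ, hbox⟩ := exists_forall_abs_bernCoeff_sub_trivariatePoly_lt d a hρ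
  obtain ⟨σ₀, hσ₀⟩ := exists_nat_one_div_lt hδ
  refine ⟨σ₀ + 1, fun σ hσ i j k hi hj hk c hc p q r hp hq hr => ?_⟩
  have hσ1 : (1 : ℝ) ≤ σ := by exact_mod_cast le_of_add_le_right hσ
  have hcorner : ∀ {m : ℕ}, m < σ → (m : ℝ) / σ ∈ Set.Icc 0 1 := fun hm =>
    ⟨by positivity, div_le_one_of_le₀ (by exact_mod_cast hm.le) (by positivity)⟩
  have hs : 1 / (σ : ℝ) ∈ Set.Icc 0 1 := ⟨by positivity, div_le_one_of_le₀ hσ1 (by positivity)⟩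
  have hsδ : 1 / (σ : ℝ) < δ := lt_of_le_of_lt (by gcongr; exact_mod_cast hσ) hσ₀
  have hshift : ∀ (m : ℕ) (x : ℝ), (m : ℝ) / σ + 1 / σ * x = (m + x) / σ := fun m x => by ring
  have hclose := hbox _ (hcorner hi) _ (hcorner hj) _ (hcorner hk) _ hs hsδ c
    (fun u v w => by rw [← hgP, hshift, hshift, hshift, hc]) p q r hp hq hr
  have hcorner_ge := hg _ (hcorner hi) _ (hcorner hj) _ (hcorner hk)
  rw [hgP] at hcorner_ge
  linarith [(abs_lt.1 hclose).1]
end
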